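/- arXiv:math/0406491 — 3 statements merged into one kernel-verified Lean document; each statement's English description precedes it below -/
import Mathlib

section
/- Let V be holomorphic on an open subset of ℂ containing the real segment [−1,1]. There exist a₀ > 0 and C > 0 such that for every real a ≥ a₀ there is a unique b ∈ ℝ with Im ∫_{−1}^{1} √((a + i·b) − V(x)) dx = 0, and this unique b satisfies |b − (1/2)·Im ∫_{−1}^{1} V(x) dx| ≤ C/a, where √ denotes the principal branch of the complex square root. -/
/-!
Once `a` exceeds `M = max |V|` on `[-1, 1]`, each `a + ib - V(x)` has positive real part, so by
`√w₂ - √w₁ = (w₂ - w₁) / (√w₁ + √w₂)` with `Re (√w₁ + √w₂) > 0` the map `b ↦ Im √(a + ib - V(x))`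
is strictly increasing; for `|b| > M` it has the sign of `b`. Integrating over `x`,
`b ↦ Im ∫ √(a + ib - V)` is continuous, strictly increasing and changes sign on `[-M - 1, M + 1]`,
hence has exactly one zero, and that zero satisfies `|b| ≤ M`. For such `b` the bound
`|√z - √a - (z - a) / (2√a)| ≤ |z - a|² / (2a√a)` gives
`∫ √(a + ib - V) = 2√a + (2ib - ∫ V) / (2√a) + O(a^(-3/2))`, and the vanishing of its imaginary
part forces `b = ½ Im ∫ V + O(1/a)`.
-/

open Set MeasureTheory intervalIntegral

namespace Complex

lemma sq_sqrt (z : ℂ) : sqrt z ^ 2 = z := cpow_ofNat_inv_pow z 2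

lemma re_sqrt_nonneg (z : ℂ) : 0 ≤ (sqrt z).re := by
  rw [sqrt, cpow_inv_two_re]
  exact Real.sqrt_nonneg _

lemma re_sqrt_pos {z : ℂ} (hz : z ∈ slitPlane) : 0 < (sqrt z).re := by
  rw [sqrt, cpow_inv_two_re, Real.sqrt_pos]
  rcases mem_slitPlane_iff.1 hz with h | h
  · linarith [re_le_norm z]
  · linarith [neg_abs_le z.re, abs_re_lt_norm.2 h]

lemma im_sqrt_pos {z : ℂ} (hz : 0 < z.im) : 0 < (sqrt z).im := by
  have h := congrArg im (sq_sqrt z)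
  rw [sq, mul_im] at h
  nlinarith [re_sqrt_nonneg z]

lemma im_sqrt_neg {z : ℂ} (hz : z.im < 0) : (sqrt z).im < 0 := by
  have h := congrArg im (sq_sqrt z)
  rw [sq, mul_im] at h
  nlinarith [re_sqrt_nonneg z]

lemma re_sqrt_add_sqrt_pos (z : ℂ) {w : ℂ} (hw : w ∈ slitPlane) :
    0 < (sqrt z + sqrt w).re := by
  rw [add_re]
  linarith [re_sqrt_nonneg z, re_sqrt_pos hw]

lemma sqrt_sub_sqrt (z : ℂ) {w : ℂ} (hw : w ∈ slitPlane) :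
    sqrt z - sqrt w = (z - w) / (sqrt z + sqrt w) := by
  have hne : sqrt z + sqrt w ≠ 0 := fun h ↦ by
    simpa [h] using re_sqrt_add_sqrt_pos z hw
  rw [eq_div_iff hne]
  linear_combination sq_sqrt z - sq_sqrt w

lemma add_mul_I_sub_mem_slitPlane {a : ℝ} (b : ℝ) {w : ℂ} (h : w.re < a) :
    a + b * I - w ∈ slitPlane :=
  mem_slitPlane_iff.2 (Or.inl (by simpa using h))

lemma strictMono_im_sqrt_add_mul_I {w : ℂ} (hw : 0 < w.re) :
    StrictMono fun t : ℝ ↦ (sqrt (w + t * I)).im := by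
  intro t₁ t₂ ht
  have hmem : w + t₁ * I ∈ slitPlane := mem_slitPlane_iff.2 (Or.inl (by simpa using hw))
  have hS := re_sqrt_add_sqrt_pos (w + t₂ * I) hmem
  have hdiff : w + t₂ * I - (w + t₁ * I) = ((t₂ - t₁ : ℝ) : ℂ) * I := by push_cast; ring
  rw [← sub_pos, ← sub_im, sqrt_sub_sqrt _ hmem, hdiff, div_im]
  generalize sqrt (w + t₂ * I) + sqrt (w + t₁ * I) = S at hS ⊢
  have hSn : 0 < normSq S := normSq_pos.2 fun h ↦ by simp [h] at hS
  simp only [mul_im, mul_re, ofReal_re, ofReal_im, I_re, I_im]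
  ring_nf
  rw [← sub_mul, ← sub_mul]
  exact mul_pos (mul_pos (sub_pos.2 ht) hS) (inv_pos.2 hSn)

lemma norm_sqrt_sub_taylor_le {a : ℝ} (ha : 0 < a) (z : ℂ) :
    ‖sqrt z - √a - (z - a) / (2 * √a)‖ ≤ ‖z - a‖ ^ 2 / (2 * √a * a) := by
  have hsa : 0 < √a := Real.sqrt_pos.2 ha
  have h := sqrt_sub_sqrt z (ofReal_mem_slitPlane.2 ha)
  rw [sqrt_of_nonneg (a := (a : ℂ)) (by exact_mod_cast ha.le), ofReal_re] at h
  set S := sqrt z + (√a : ℂ)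
  have hS : √a ≤ ‖S‖ := by
    refine le_trans ?_ (re_le_norm S)
    simp only [S, add_re, ofReal_re]
    linarith [re_sqrt_nonneg z]
  have hS0 : S ≠ 0 := fun h ↦ by simp [h] at hS; linarith
  have hz : z - a = (sqrt z - √a) * S := by rw [h, div_mul_cancel₀ _ hS0]
  have key : sqrt z - √a - (z - a) / (2 * √a) = -((z - a) ^ 2 / (2 * √a * S ^ 2)) := by
    have : ((√a : ℝ) : ℂ) ≠ 0 := by exact_mod_cast hsa.ne'
    rw [hz]
    field_simp
    simp only [S]
    ring
  have haS : a ≤ ‖S‖ ^ 2 := by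
    simpa [Real.sq_sqrt ha.le] using pow_le_pow_left₀ hsa.le hS 2
  rw [key, norm_neg, norm_div, norm_pow, norm_mul, norm_mul, norm_pow, Complex.norm_ofNat,
    norm_real, Real.norm_of_nonneg hsa.le]
  gcongr

end Complex

open Complex

/-- The paper's action is `S_{s,t}(E) = I * sqrtIntegral v s t E`, so `Re S = 0` exactly when
`(sqrtIntegral v s t E).im = 0`. -/
noncomputable def sqrtIntegral (v : ℝ → ℂ) (s t : ℝ) (E : ℂ) : ℂ :=
  ∫ x in s..t, sqrt (E - v x)

section SqrtIntegral

variable {v : ℝ → ℂ} {s t M : ℝ}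

lemma continuousOn_sqrt_sub (hv : ContinuousOn v (Icc s t)) {E : ℂ}
    (hE : ∀ x ∈ Icc s t, E - v x ∈ slitPlane) :
    ContinuousOn (fun x ↦ sqrt (E - v x)) (Icc s t) :=
  continuousOn_sqrt.comp (continuousOn_const.sub hv) hE

lemma im_sqrtIntegral (hst : s ≤ t) (hv : ContinuousOn v (Icc s t)) {E : ℂ}
    (hE : ∀ x ∈ Icc s t, E - v x ∈ slitPlane) :
    (sqrtIntegral v s t E).im = ∫ x in s..t, (sqrt (E - v x)).im :=
  (intervalIntegral_im ((continuousOn_sqrt_sub hv hE).intervalIntegrable_of_Icc hst)).symm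

lemma im_sqrtIntegral_pos (hst : s < t) (hv : ContinuousOn v (Icc s t)) {E : ℂ}
    (hE : ∀ x ∈ Icc s t, (v x).im < E.im) : 0 < (sqrtIntegral v s t E).im := by
  have him : ∀ x ∈ Icc s t, 0 < (E - v x).im := fun x hx ↦ by simpa using hE x hx
  have hslit : ∀ x ∈ Icc s t, E - v x ∈ slitPlane :=
    fun x hx ↦ mem_slitPlane_iff.2 (Or.inr (him x hx).ne')
  rw [im_sqrtIntegral hst.le hv hslit]
  refine intervalIntegral_pos_of_pos_on ?_
    (fun x hx ↦ im_sqrt_pos (him x (Ioo_subset_Icc_self hx))) hst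
  exact (continuous_im.comp_continuousOn (continuousOn_sqrt_sub hv hslit)).intervalIntegrable_of_Icc
    hst.le

lemma im_sqrtIntegral_neg (hst : s < t) (hv : ContinuousOn v (Icc s t)) {E : ℂ}
    (hE : ∀ x ∈ Icc s t, E.im < (v x).im) : (sqrtIntegral v s t E).im < 0 := by
  have him : ∀ x ∈ Icc s t, (E - v x).im < 0 := fun x hx ↦ by simpa using hE x hx
  have hslit : ∀ x ∈ Icc s t, E - v x ∈ slitPlane :=
    fun x hx ↦ mem_slitPlane_iff.2 (Or.inr (him x hx).ne)
  rw [im_sqrtIntegral hst.le hv hslit, ← neg_pos, ← intervalIntegral.integral_neg]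
  refine intervalIntegral_pos_of_pos_on ?_
    (fun x hx ↦ neg_pos.2 (im_sqrt_neg (him x (Ioo_subset_Icc_self hx)))) hst
  exact (continuous_im.comp_continuousOn (continuousOn_sqrt_sub hv hslit)).neg
    |>.intervalIntegrable_of_Icc hst.le

lemma strictMono_im_sqrtIntegral (hst : s < t) (hv : ContinuousOn v (Icc s t)) {a : ℝ}
    (ha : ∀ x ∈ Icc s t, (v x).re < a) :
    StrictMono fun b : ℝ ↦ (sqrtIntegral v s t (a + b * I)).im := by
  intro b₁ b₂ hb
  have hslit (b : ℝ) : ∀ x ∈ Icc s t, a + b * I - v x ∈ slitPlane :=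
    fun x hx ↦ add_mul_I_sub_mem_slitPlane b (ha x hx)
  have hcont (b : ℝ) := continuous_im.comp_continuousOn (continuousOn_sqrt_sub hv (hslit b))
  have hlt : ∀ x ∈ Icc s t, (sqrt (a + b₁ * I - v x)).im < (sqrt (a + b₂ * I - v x)).im := by
    intro x hx
    have hre : 0 < ((a : ℂ) - v x).re := by simpa using ha x hx
    have hrw (b : ℝ) : a + b * I - v x = (a - v x) + b * I := by ring
    rw [hrw, hrw]
    exact strictMono_im_sqrt_add_mul_I hre hb
  have hs : s ∈ Icc s t := left_mem_Icc.2 hst.le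
  dsimp only
  rw [im_sqrtIntegral hst.le hv (hslit b₁), im_sqrtIntegral hst.le hv (hslit b₂)]
  exact integral_lt_integral_of_continuousOn_of_le_of_exists_lt hst (hcont b₁) (hcont b₂)
    (fun x hx ↦ (hlt x (Ioc_subset_Icc_self hx)).le) ⟨s, hs, hlt s hs⟩

lemma continuous_sqrtIntegral (hst : s ≤ t) (hv : ContinuousOn v (Icc s t)) {a : ℝ}
    (ha : ∀ x ∈ Icc s t, (v x).re < a) :
    Continuous fun b : ℝ ↦ sqrtIntegral v s t (a + b * I) := by
  set w := IccExtend hst (domRestrict (Icc s t) v)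
  have hw : Continuous w := (continuousOn_iff_continuous_domRestrict.1 hv).Icc_extend'
  have hwv : ∀ x ∈ uIcc s t, w x = v x := fun x hx ↦
    IccExtend_of_mem _ _ (uIcc_of_le hst ▸ hx)
  have heq : (fun b : ℝ ↦ sqrtIntegral v s t (a + b * I))
      = fun b : ℝ ↦ ∫ x in s..t, sqrt (a + b * I - w x) :=
    funext fun b ↦ integral_congr fun x hx ↦ by simp only [hwv x hx]
  rw [heq]
  refine continuous_parametric_intervalIntegral_of_continuous' ?_ s t
  exact continuousOn_sqrt.comp_continuous (by fun_prop) fun p ↦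
    add_mul_I_sub_mem_slitPlane p.1 (ha _ (projIcc s t hst p.2).2)

lemma existsUnique_im_sqrtIntegral_eq_zero (hst : s < t) (hv : ContinuousOn v (Icc s t))
    (hM : ∀ x ∈ Icc s t, ‖v x‖ ≤ M) {a : ℝ} (hMa : M < a) :
    ∃! b : ℝ, (sqrtIntegral v s t (a + b * I)).im = 0 := by
  have hM0 : 0 ≤ M := (norm_nonneg _).trans (hM s (left_mem_Icc.2 hst.le))
  have hre : ∀ x ∈ Icc s t, (v x).re < a := fun x hx ↦ by
    linarith [re_le_norm (v x), hM x hx]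
  have him : ∀ x ∈ Icc s t, |(v x).im| < M + 1 := fun x hx ↦ by
    linarith [abs_im_le_norm (v x), hM x hx]
  have hlo : (sqrtIntegral v s t (a + (-(M + 1) : ℝ) * I)).im < 0 :=
    im_sqrtIntegral_neg hst hv fun x hx ↦ by simpa using (abs_lt.1 (him x hx)).1
  have hhi : 0 < (sqrtIntegral v s t (a + (M + 1 : ℝ) * I)).im :=
    im_sqrtIntegral_pos hst hv fun x hx ↦ by simpa using (abs_lt.1 (him x hx)).2
  obtain ⟨b, -, hb⟩ := intermediate_value_Icc (by linarith)
    (continuous_im.comp (continuous_sqrtIntegral hst.le hv hre)).continuousOn ⟨hlo.le, hhi.le⟩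
  exact ⟨b, hb, fun b' hb' ↦ (strictMono_im_sqrtIntegral hst hv hre).injective (hb'.trans hb.symm)⟩

lemma abs_im_le_of_im_sqrtIntegral_eq_zero (hst : s < t) (hv : ContinuousOn v (Icc s t))
    (hM : ∀ x ∈ Icc s t, ‖v x‖ ≤ M) {E : ℂ} (h : (sqrtIntegral v s t E).im = 0) :
    |E.im| ≤ M := by
  have him : ∀ x ∈ Icc s t, |(v x).im| ≤ M := fun x hx ↦ (abs_im_le_norm _).trans (hM x hx)
  refine abs_le.2 ⟨not_lt.1 fun hE ↦ ?_, not_lt.1 fun hE ↦ ?_⟩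
  · refine (im_sqrtIntegral_neg hst hv fun x hx ↦ ?_).ne h
    linarith [(abs_le.1 (him x hx)).1]
  · refine (im_sqrtIntegral_pos hst hv fun x hx ↦ ?_).ne' h
    linarith [(abs_le.1 (him x hx)).2]

lemma norm_sqrtIntegral_sub_le (hst : s ≤ t) (hv : ContinuousOn v (Icc s t)) {a : ℝ} (ha : 0 < a)
    {E : ℂ} (hE : ∀ x ∈ Icc s t, E - v x ∈ slitPlane) {R : ℝ}
    (hR : ∀ x ∈ Icc s t, ‖E - a - v x‖ ≤ R) :
    ‖sqrtIntegral v s t E - ((t - s) * √a + ((t - s) * (E - a) - ∫ x in s..t, v x) / (2 * √a))‖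
      ≤ R ^ 2 / (2 * √a * a) * (t - s) := by
  have hvi : IntervalIntegrable v volume s t := hv.intervalIntegrable_of_Icc hst
  have hlin : (t - s) * √a + ((t - s) * (E - a) - ∫ x in s..t, v x) / (2 * √a)
      = ∫ x in s..t, (√a + (E - a - v x) / (2 * √a) : ℂ) := by
    rw [integral_add intervalIntegrable_const ((intervalIntegrable_const.sub hvi).div_const _),
      intervalIntegral.integral_div, integral_sub intervalIntegrable_const hvi]
    simp only [intervalIntegral.integral_const, real_smul, ofReal_sub]
  rw [hlin, sqrtIntegral, ← integral_sub
    ((continuousOn_sqrt_sub hv hE).intervalIntegrable_of_Icc hst)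
    (intervalIntegrable_const.add ((intervalIntegrable_const.sub hvi).div_const _))]
  refine (intervalIntegral.norm_integral_le_of_norm_le_const fun x hx ↦ ?_).trans_eq
    (by rw [abs_of_nonneg (sub_nonneg.2 hst)])
  have hx' : x ∈ Icc s t := Ioc_subset_Icc_self (uIoc_of_le hst ▸ hx)
  calc ‖sqrt (E - v x) - (√a + (E - a - v x) / (2 * √a))‖
      = ‖sqrt (E - v x) - √a - (E - v x - a) / (2 * √a)‖ := by congr 1; ring
    _ ≤ ‖E - v x - a‖ ^ 2 / (2 * √a * a) := norm_sqrt_sub_taylor_le ha _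
    _ ≤ R ^ 2 / (2 * √a * a) := by
      rw [sub_right_comm]
      gcongr
      exact hR x hx'

lemma abs_sub_le_of_im_sqrtIntegral_eq_zero (hst : s < t) (hv : ContinuousOn v (Icc s t))
    (hM : ∀ x ∈ Icc s t, ‖v x‖ ≤ M) {a b : ℝ} (hMa : M < a)
    (h : (sqrtIntegral v s t (a + b * I)).im = 0) :
    |b - (t - s)⁻¹ * (∫ x in s..t, v x).im| ≤ 4 * M ^ 2 / a := by
  have ha : 0 < a := ((norm_nonneg _).trans (hM s (left_mem_Icc.2 hst.le))).trans_lt hMa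
  have hts : 0 < t - s := sub_pos.2 hst
  have hsa : 0 < √a := Real.sqrt_pos.2 ha
  have hb : |b| ≤ M := by simpa using abs_im_le_of_im_sqrtIntegral_eq_zero hst hv hM h
  have hR : ∀ x ∈ Icc s t, ‖a + b * I - a - v x‖ ≤ 2 * M := fun x hx ↦
    calc ‖a + b * I - a - v x‖ ≤ ‖(b : ℂ) * I‖ + ‖v x‖ := by
          rw [add_sub_cancel_left]
          exact norm_sub_le _ _
      _ ≤ 2 * M := by
          simp only [norm_mul, norm_real, Real.norm_eq_abs, norm_I, mul_one]
          linarith [hM x hx]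
  have hE : ∀ x ∈ Icc s t, a + b * I - v x ∈ slitPlane := fun x hx ↦
    add_mul_I_sub_mem_slitPlane b (by linarith [re_le_norm (v x), hM x hx])
  set J := (∫ x in s..t, v x).im
  have hmain : |((t - s) * b - J) / (2 * √a)| ≤ (2 * M) ^ 2 / (2 * √a * a) * (t - s) := by
    refine le_trans (le_of_eq ?_)
      ((abs_im_le_norm _).trans (norm_sqrtIntegral_sub_le hst.le hv ha hE hR))
    rw [sub_im, h, zero_sub, abs_neg, ← ofReal_ofNat, ← ofReal_mul, add_im, div_ofReal_im]
    simp [J]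
  rw [abs_div, abs_of_pos (by positivity : (0 : ℝ) < 2 * √a), div_le_iff₀ (by positivity)]
    at hmain
  have hdiv : b - (t - s)⁻¹ * J = ((t - s) * b - J) / (t - s) := by field_simp
  rw [hdiv, abs_div, abs_of_pos hts, div_le_iff₀ hts]
  refine hmain.trans_eq ?_
  field_simp
  ring

end SqrtIntegral

theorem stmt7_general (V : ℂ → ℂ) (U : Set ℂ)
    (hUV : ∀ x ∈ Set.Icc (-1:ℝ) 1, (x : ℂ) ∈ U)
    (hV : DifferentiableOn ℂ V U) :
    ∃ a₀ : ℝ, 0 < a₀ ∧ ∃ C : ℝ, 0 < C ∧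
      ∀ a : ℝ, a₀ ≤ a →
        (∃! b : ℝ,
          (∫ x in (-1:ℝ)..1,
            ((a : ℂ) + (b : ℂ) * Complex.I - V (x : ℂ)) ^ (1/2 : ℂ)).im = 0) ∧
        ∀ b : ℝ,
          (∫ x in (-1:ℝ)..1,
            ((a : ℂ) + (b : ℂ) * Complex.I - V (x : ℂ)) ^ (1/2 : ℂ)).im = 0 →
          |b - (1/2) * (∫ x in (-1:ℝ)..1, V (x : ℂ)).im| ≤ C / a := by
  have hv : ContinuousOn (fun x : ℝ ↦ V x) (Icc (-1) 1) :=
    hV.continuousOn.comp continuous_ofReal.continuousOn hUV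
  obtain ⟨M, hM⟩ := isCompact_Icc.exists_bound_of_continuousOn hv
  have hM₁ : ∀ x ∈ Icc (-1 : ℝ) 1, ‖V x‖ ≤ max M 1 :=
    fun x hx ↦ (hM x hx).trans (le_max_left _ _)
  have hS (a b : ℝ) : ∫ x in (-1 : ℝ)..1, ((a : ℂ) + b * I - V x) ^ (1 / 2 : ℂ)
      = sqrtIntegral (fun x : ℝ ↦ V x) (-1) 1 (a + b * I) := by
    simp only [one_div]
    rfl
  refine ⟨max M 1 + 1, by positivity, 4 * max M 1 ^ 2, by positivity, fun a ha ↦ ?_⟩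
  have hMa : max M 1 < a := by linarith
  simp only [hS]
  refine ⟨existsUnique_im_sqrtIntegral_eq_zero (by norm_num) hv hM₁ hMa, fun b hb ↦ ?_⟩
  have hbound := abs_sub_le_of_im_sqrtIntegral_eq_zero (by norm_num) hv hM₁ hMa hb
  norm_num at hbound ⊢
  exact hbound

/-- Theorem `curve` of the paper: for `a` large, the equation
`Im ∫_{-1}^1 √((a+ib) − V(x)) dx = 0` has a unique real solution `b`, and
`b = ½·Im ∫_{-1}^1 V + O(1/a)`. -/
theorem stmt7 (V : ℂ → ℂ) (U : Set ℂ) (hU : IsOpen U)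
    (hUV : ∀ x ∈ Set.Icc (-1:ℝ) 1, (x : ℂ) ∈ U)
    (hV : DifferentiableOn ℂ V U) :
    ∃ a₀ : ℝ, 0 < a₀ ∧ ∃ C : ℝ, 0 < C ∧
      ∀ a : ℝ, a₀ ≤ a →
        (∃! b : ℝ,
          (∫ x in (-1:ℝ)..1,
            ((a : ℂ) + (b : ℂ) * Complex.I - V (x : ℂ)) ^ (1/2 : ℂ)).im = 0) ∧
        ∀ b : ℝ,
          (∫ x in (-1:ℝ)..1,
            ((a : ℂ) + (b : ℂ) * Complex.I - V (x : ℂ)) ^ (1/2 : ℂ)).im = 0 →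
          |b - (1/2) * (∫ x in (-1:ℝ)..1, V (x : ℂ)).im| ≤ C / a :=
  stmt7_general V U hUV hV
end

section
/- Let V be holomorphic on an open subset of ℂ containing the real segment [−1,1], let δ ∈ ℝ and β ∈ (−1,1). There exist a₀ > 0 and C > 0 such that for every real a ≥ a₀ there is a unique b ∈ ℝ with Im ∫_{β}^{1} √((a + i·b) − V(x) − i·δ) dx = 0, and this unique b satisfies |b − ( (Im ∫_{β}^{1} V(x) dx)/(1−β) + δ )| ≤ C/a, where √ denotes the principal branch of the complex square root. -/
/-!
For `0 < Re c` put `w b = (c + b i) ^ (1/2)`. Then `w b₂ ^ 2 - w b₁ ^ 2 = (b₂ - b₁) i` and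
`√(Re c) ≤ Re w b`, so `Im w` is strictly increasing and Lipschitz in `b`; moreover `Im w b` has
the sign of `Im c + b`. With `c = a - V x` (so `0 < Re c` once `a > sup ‖V‖`), the integral of
`Im w` over `[β, 1]` is therefore a continuous strictly increasing function of `b` which changes
sign, and has a unique zero `b` with `|b| ≤ sup ‖V‖`. Integrating the expansion
`z ^ (1/2) = √a + (z - a) / (2√a) + O(‖z - a‖² / a ^ (3/2))`, valid for every `z`, shows
that this zero satisfies `(1 - β) b - Im ∫ V = O(1/a)`; the shift by `δ` is a change of
variable.
-/

open Complex Set MeasureTheory intervalIntegral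

lemma cpow_half_mul_self (z : ℂ) : z ^ (1/2 : ℂ) * z ^ (1/2 : ℂ) = z := by
  rw [← sq, one_div, cpow_ofNat_inv_pow]

lemma sqrt_re_le_re_cpow_half (z : ℂ) : √z.re ≤ (z ^ (1/2 : ℂ)).re := by
  rw [one_div, cpow_inv_two_re]
  exact Real.sqrt_le_sqrt (by linarith [re_le_norm z])

lemma re_cpow_half_nonneg (z : ℂ) : 0 ≤ (z ^ (1/2 : ℂ)).re := by
  rw [one_div, cpow_inv_two_re]
  exact Real.sqrt_nonneg _

lemma im_eq_two_mul_re_mul_im_cpow_half (z : ℂ) :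
    z.im = 2 * (z ^ (1/2 : ℂ)).re * (z ^ (1/2 : ℂ)).im := by
  conv_lhs => rw [← cpow_half_mul_self z]
  rw [mul_im]
  ring

lemma im_cpow_half_pos {z : ℂ} (hz : 0 < z.im) : 0 < (z ^ (1/2 : ℂ)).im := by
  have hprod := im_eq_two_mul_re_mul_im_cpow_half z
  have hre := re_cpow_half_nonneg z
  by_contra! h
  nlinarith

lemma im_cpow_half_neg {z : ℂ} (hz : z.im < 0) : (z ^ (1/2 : ℂ)).im < 0 := by
  have hprod := im_eq_two_mul_re_mul_im_cpow_half z
  have hre := re_cpow_half_nonneg z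
  by_contra! h
  nlinarith

lemma exists_im_cpow_half_add_mul_I_sub_eq {c : ℂ} (hc : 0 < c.re) (b₁ b₂ : ℝ) :
    ∃ κ, 0 < κ ∧ κ ≤ (2 * √c.re)⁻¹ ∧
      ((c + b₂ * I) ^ (1/2 : ℂ)).im - ((c + b₁ * I) ^ (1/2 : ℂ)).im =
        (b₂ - b₁) * κ := by
  set w₁ := (c + b₁ * I) ^ (1/2 : ℂ)
  set w₂ := (c + b₂ * I) ^ (1/2 : ℂ)
  have hσ : 2 * √c.re ≤ (w₁ + w₂).re := by
    have h₁ := sqrt_re_le_re_cpow_half (c + b₁ * I)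
    have h₂ := sqrt_re_le_re_cpow_half (c + b₂ * I)
    simp only [add_re, mul_re, ofReal_re, ofReal_im, I_re, I_im] at h₁ h₂ ⊢
    norm_num at h₁ h₂
    linarith
  have hσ_pos : 0 < (w₁ + w₂).re := lt_of_lt_of_le (by positivity) hσ
  have hσ_ne : w₁ + w₂ ≠ 0 := fun h => by simp [h] at hσ_pos
  have hnormSq : 0 < normSq (w₁ + w₂) := normSq_pos.2 hσ_ne
  refine ⟨(w₁ + w₂).re / normSq (w₁ + w₂), div_pos hσ_pos hnormSq, ?_, ?_⟩
  · calc (w₁ + w₂).re / normSq (w₁ + w₂) ≤ (w₁ + w₂).re⁻¹ := by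
          rw [div_le_iff₀ hnormSq, normSq_apply, inv_mul_eq_div, le_div_iff₀ hσ_pos]
          nlinarith [sq_nonneg (w₁ + w₂).im]
      _ ≤ (2 * √c.re)⁻¹ := inv_anti₀ (by positivity) hσ
  · have hd : w₂ - w₁ = ((b₂ - b₁ : ℝ) : ℂ) * I / (w₁ + w₂) := by
      rw [eq_div_iff hσ_ne]
      push_cast
      linear_combination cpow_half_mul_self (c + b₂ * I) - cpow_half_mul_self (c + b₁ * I)
    have := congrArg im hd
    rw [sub_im, div_im] at this
    simp only [this, mul_re, mul_im, ofReal_re, ofReal_im, I_re, I_im]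
    ring

lemma norm_cpow_half_sub_sub_le {s : ℝ} (hs : 0 < s) (z : ℂ) :
    ‖z ^ (1/2 : ℂ) - s - (z - s ^ 2) / (2 * s)‖ ≤ ‖z - s ^ 2‖ ^ 2 / (2 * s ^ 3) := by
  set w := z ^ (1/2 : ℂ)
  have hw : w * w = z := cpow_half_mul_self z
  have hsum : s ≤ ‖w + s‖ := by
    calc s ≤ (w + s).re := by simp; linarith [re_cpow_half_nonneg z]
      _ ≤ ‖w + s‖ := re_le_norm _
  have hsum_ne : w + s ≠ 0 := norm_pos_iff.1 (hs.trans_le hsum)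
  have hs_ne : (s : ℂ) ≠ 0 := by exact_mod_cast hs.ne'
  have hnorm : ‖w - s‖ ≤ ‖z - s ^ 2‖ / s := by
    have hd : w - s = (z - s ^ 2) / (w + s) := by
      rw [eq_div_iff hsum_ne]
      linear_combination hw
    rw [hd, norm_div]
    exact div_le_div_of_nonneg_left (norm_nonneg _) hs hsum
  have hkey : w - s - (z - s ^ 2) / (2 * s) = -(w - s) ^ 2 / (2 * s) := by
    field_simp
    linear_combination hw
  have h2s : ‖(2 * s : ℂ)‖ = 2 * s := by
    rw [← ofReal_ofNat, ← ofReal_mul, norm_real, Real.norm_of_nonneg (by positivity)]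
  rw [hkey, norm_div, norm_neg, norm_pow, h2s]
  calc ‖w - s‖ ^ 2 / (2 * s) ≤ (‖z - s ^ 2‖ / s) ^ 2 / (2 * s) := by gcongr
    _ = ‖z - s ^ 2‖ ^ 2 / (2 * s ^ 3) := by field_simp

lemma abs_im_cpow_half_sub_le {s : ℝ} (hs : 0 < s) (z : ℂ) :
    |(z ^ (1/2 : ℂ)).im - z.im / (2 * s)| ≤ ‖z - s ^ 2‖ ^ 2 / (2 * s ^ 3) := by
  have him : (z ^ (1/2 : ℂ) - s - (z - s ^ 2) / (2 * s)).im =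
      (z ^ (1/2 : ℂ)).im - z.im / (2 * s) := by
    rw [← ofReal_ofNat, ← ofReal_mul, ← ofReal_pow, sub_im, sub_im, div_ofReal_im, sub_im,
      ofReal_im, ofReal_im]
    ring
  rw [← him]
  exact (abs_im_le_norm _).trans (norm_cpow_half_sub_sub_le hs z)

noncomputable def imSqrtIntegral (f : ℝ → ℂ) (β b : ℝ) : ℝ :=
  (∫ x in β..1, (f x + b * I) ^ (1/2 : ℂ)).im

section

variable {f : ℝ → ℂ} {β : ℝ}

lemma continuousOn_cpow_half_add_mul_I (hf : ContinuousOn f (Icc β 1))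
    (hre : ∀ x ∈ Icc β 1, 0 < (f x).re) (b : ℝ) :
    ContinuousOn (fun x => (f x + b * I) ^ (1/2 : ℂ)) (Icc β 1) :=
  (hf.add continuousOn_const).cpow_const fun x hx => Or.inl (by simpa using hre x hx)

lemma imSqrtIntegral_eq_integral_im (hβ : β ≤ 1) (hf : ContinuousOn f (Icc β 1))
    (hre : ∀ x ∈ Icc β 1, 0 < (f x).re) (b : ℝ) :
    imSqrtIntegral f β b = ∫ x in β..1, ((f x + b * I) ^ (1/2 : ℂ)).im :=
  (intervalIntegral_im
    ((continuousOn_cpow_half_add_mul_I hf hre b).intervalIntegrable_of_Icc hβ)).symm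

lemma intervalIntegrable_im_cpow_half_add_mul_I (hβ : β ≤ 1) (hf : ContinuousOn f (Icc β 1))
    (hre : ∀ x ∈ Icc β 1, 0 < (f x).re) (b : ℝ) :
    IntervalIntegrable (fun x => ((f x + b * I) ^ (1/2 : ℂ)).im) volume β 1 :=
  (continuous_im.comp_continuousOn
    (continuousOn_cpow_half_add_mul_I hf hre b)).intervalIntegrable_of_Icc hβ

lemma imSqrtIntegral_sub (hβ : β ≤ 1) (hf : ContinuousOn f (Icc β 1))
    (hre : ∀ x ∈ Icc β 1, 0 < (f x).re) (b₁ b₂ : ℝ) :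
    imSqrtIntegral f β b₂ - imSqrtIntegral f β b₁ =
      ∫ x in β..1,
        (((f x + b₂ * I) ^ (1/2 : ℂ)).im - ((f x + b₁ * I) ^ (1/2 : ℂ)).im) := by
  rw [imSqrtIntegral_eq_integral_im hβ hf hre, imSqrtIntegral_eq_integral_im hβ hf hre,
    integral_sub (intervalIntegrable_im_cpow_half_add_mul_I hβ hf hre b₂)
      (intervalIntegrable_im_cpow_half_add_mul_I hβ hf hre b₁)]

lemma strictMono_imSqrtIntegral (hβ : β < 1) (hf : ContinuousOn f (Icc β 1))
    (hre : ∀ x ∈ Icc β 1, 0 < (f x).re) : StrictMono (imSqrtIntegral f β) := by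
  intro b₁ b₂ hb
  rw [← sub_pos, imSqrtIntegral_sub hβ.le hf hre]
  refine intervalIntegral_pos_of_pos_on
    ((intervalIntegrable_im_cpow_half_add_mul_I hβ.le hf hre b₂).sub
      (intervalIntegrable_im_cpow_half_add_mul_I hβ.le hf hre b₁)) (fun x hx => ?_) hβ
  obtain ⟨κ, hκ, -, hdiff⟩ :=
    exists_im_cpow_half_add_mul_I_sub_eq (hre x (Ioo_subset_Icc_self hx)) b₁ b₂
  rw [hdiff]
  exact mul_pos (sub_pos.2 hb) hκ

lemma continuous_imSqrtIntegral (hβ : β ≤ 1) (hf : ContinuousOn f (Icc β 1))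
    (hre : ∀ x ∈ Icc β 1, 0 < (f x).re) : Continuous (imSqrtIntegral f β) := by
  obtain ⟨x₀, hx₀, hmin⟩ := isCompact_Icc.exists_isMinOn (nonempty_Icc.2 hβ)
    (continuous_re.comp_continuousOn hf)
  set K := (1 - β) * (2 * √(f x₀).re)⁻¹
  refine (LipschitzWith.of_dist_le_mul (K := K.toNNReal) fun b₂ b₁ => ?_).continuous
  rw [Real.coe_toNNReal _ (by have := hre x₀ hx₀; positivity), Real.dist_eq, Real.dist_eq,
    imSqrtIntegral_sub hβ hf hre]
  have hbound : ∀ x ∈ uIoc β 1,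
      ‖((f x + b₂ * I) ^ (1/2 : ℂ)).im - ((f x + b₁ * I) ^ (1/2 : ℂ)).im‖ ≤
        |b₂ - b₁| * (2 * √(f x₀).re)⁻¹ := by
    intro x hx
    have hx' : x ∈ Icc β 1 := Ioc_subset_Icc_self (uIoc_of_le hβ ▸ hx)
    obtain ⟨κ, hκ, hκ_le, hdiff⟩ :=
      exists_im_cpow_half_add_mul_I_sub_eq (hre x hx') b₁ b₂
    rw [hdiff, Real.norm_eq_abs, abs_mul, abs_of_pos hκ]
    gcongr
    exact hκ_le.trans (inv_anti₀ (by have := hre x₀ hx₀; positivity)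
      (by gcongr 2 * √?_; exact hmin hx'))
  refine (intervalIntegral.norm_integral_le_of_norm_le_const hbound).trans_eq ?_
  rw [abs_of_nonneg (sub_nonneg.2 hβ)]
  ring

lemma imSqrtIntegral_pos (hβ : β < 1) (hf : ContinuousOn f (Icc β 1))
    (hre : ∀ x ∈ Icc β 1, 0 < (f x).re) {b : ℝ}
    (him : ∀ x ∈ Icc β 1, 0 < (f x).im + b) :
    0 < imSqrtIntegral f β b := by
  rw [imSqrtIntegral_eq_integral_im hβ.le hf hre]
  refine intervalIntegral_pos_of_pos_on
    (intervalIntegrable_im_cpow_half_add_mul_I hβ.le hf hre b)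
    (fun x hx => im_cpow_half_pos ?_) hβ
  simpa using him x (Ioo_subset_Icc_self hx)

lemma imSqrtIntegral_neg (hβ : β < 1) (hf : ContinuousOn f (Icc β 1))
    (hre : ∀ x ∈ Icc β 1, 0 < (f x).re) {b : ℝ}
    (him : ∀ x ∈ Icc β 1, (f x).im + b < 0) :
    imSqrtIntegral f β b < 0 := by
  rw [imSqrtIntegral_eq_integral_im hβ.le hf hre, ← neg_pos, ← intervalIntegral.integral_neg]
  refine intervalIntegral_pos_of_pos_on
    (intervalIntegrable_im_cpow_half_add_mul_I hβ.le hf hre b).neg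
    (fun x hx => neg_pos.2 (im_cpow_half_neg ?_)) hβ
  simpa using him x (Ioo_subset_Icc_self hx)

lemma abs_le_of_imSqrtIntegral_eq_zero (hβ : β < 1) (hf : ContinuousOn f (Icc β 1))
    (hre : ∀ x ∈ Icc β 1, 0 < (f x).re) {M b : ℝ} (hM : ∀ x ∈ Icc β 1, |(f x).im| ≤ M)
    (hb : imSqrtIntegral f β b = 0) : |b| ≤ M := by
  by_contra! hMb
  rcases lt_abs.1 hMb with hMb | hMb
  · refine (imSqrtIntegral_pos hβ hf hre fun x hx => ?_).ne' hb
    linarith [neg_abs_le (f x).im, hM x hx]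
  · refine (imSqrtIntegral_neg hβ hf hre fun x hx => ?_).ne hb
    linarith [le_abs_self (f x).im, hM x hx]

lemma existsUnique_imSqrtIntegral_eq_zero (hβ : β < 1) (hf : ContinuousOn f (Icc β 1))
    (hre : ∀ x ∈ Icc β 1, 0 < (f x).re) : ∃! b, imSqrtIntegral f β b = 0 := by
  obtain ⟨M, hM⟩ :=
    isCompact_Icc.exists_bound_of_continuousOn (continuous_im.comp_continuousOn hf)
  have hM' : ∀ x ∈ Icc β 1, |(f x).im| ≤ |M| := fun x hx => (hM x hx).trans (le_abs_self M)
  have hneg : imSqrtIntegral f β (-|M| - 1) < 0 := imSqrtIntegral_neg hβ hf hre fun x hx => by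
    linarith [le_abs_self (f x).im, hM' x hx]
  have hpos : 0 < imSqrtIntegral f β (|M| + 1) := imSqrtIntegral_pos hβ hf hre fun x hx => by
    linarith [neg_abs_le (f x).im, hM' x hx]
  obtain ⟨b, -, hb⟩ := intermediate_value_Icc (by linarith [abs_nonneg M])
    (continuous_imSqrtIntegral hβ.le hf hre).continuousOn ⟨hneg.le, hpos.le⟩
  exact ⟨b, hb, fun b' hb' =>
    (strictMono_imSqrtIntegral hβ hf hre).injective (hb'.trans hb.symm)⟩

lemma abs_add_div_le_of_imSqrtIntegral_eq_zero (hβ : β < 1) (hf : ContinuousOn f (Icc β 1))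
    (hre : ∀ x ∈ Icc β 1, 0 < (f x).re) {s R b : ℝ} (hs : 0 < s)
    (hR : ∀ x ∈ Icc β 1, ‖f x + b * I - s ^ 2‖ ≤ R) (hb : imSqrtIntegral f β b = 0) :
    |b + (∫ x in β..1, f x).im / (1 - β)| ≤ R ^ 2 / s ^ 2 := by
  have h1β : 0 < 1 - β := sub_pos.2 hβ
  set J := (∫ x in β..1, f x).im
  set g : ℝ → ℝ := fun x => ((f x).im + b) / (2 * s)
  have hfim : IntervalIntegrable (fun x => (f x).im) volume β 1 :=
    (continuous_im.comp_continuousOn hf).intervalIntegrable_of_Icc hβ.le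
  have hg : IntervalIntegrable g volume β 1 := (hfim.add intervalIntegrable_const).div_const _
  have hint_g : ∫ x in β..1, g x = (J + (1 - β) * b) / (2 * s) := by
    have hJ : ∫ x in β..1, (f x).im = J :=
      intervalIntegral_im (hf.intervalIntegrable_of_Icc hβ.le)
    simp only [g, intervalIntegral.integral_div, integral_add hfim intervalIntegrable_const,
      intervalIntegral.integral_const, smul_eq_mul, hJ]
  have hbound : ∀ x ∈ uIoc β 1,
      ‖((f x + b * I) ^ (1/2 : ℂ)).im - g x‖ ≤ R ^ 2 / (2 * s ^ 3) := by
    intro x hx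
    have hx' : x ∈ Icc β 1 := Ioc_subset_Icc_self (uIoc_of_le hβ.le ▸ hx)
    have h := abs_im_cpow_half_sub_le hs (f x + b * I)
    simp only [add_im, mul_im, ofReal_re, ofReal_im, I_re, I_im, mul_zero, mul_one, add_zero] at h
    rw [Real.norm_eq_abs]
    refine h.trans ?_
    gcongr
    exact hR x hx'
  have herr := intervalIntegral.norm_integral_le_of_norm_le_const hbound
  rw [integral_sub (intervalIntegrable_im_cpow_half_add_mul_I hβ.le hf hre b) hg,
    ← imSqrtIntegral_eq_integral_im hβ.le hf hre, hb, zero_sub, norm_neg, hint_g,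
    Real.norm_eq_abs, abs_div, abs_of_pos (by positivity : (0:ℝ) < 2 * s),
    abs_of_pos h1β, div_le_iff₀ (by positivity)] at herr
  have hrw : b + J / (1 - β) = (J + (1 - β) * b) / (1 - β) := by field_simp; ring
  rw [hrw, abs_div, abs_of_pos h1β, div_le_iff₀ h1β]
  calc |J + (1 - β) * b| ≤ R ^ 2 / (2 * s ^ 3) * (1 - β) * (2 * s) := herr
    _ = R ^ 2 / s ^ 2 * (1 - β) := by field_simp

end

lemma abs_sub_div_le_of_imSqrtIntegral_const_sub_eq_zero {g : ℝ → ℂ} {β M a b : ℝ}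
    (hβ : β < 1) (hg : ContinuousOn g (Icc β 1)) (hM : ∀ x ∈ Icc β 1, ‖g x‖ ≤ M)
    (ha : M < a) (hb : imSqrtIntegral (fun x => a - g x) β b = 0) :
    |b - (∫ x in β..1, g x).im / (1 - β)| ≤ (2 * M) ^ 2 / a := by
  have hM₀ : 0 ≤ M := (norm_nonneg _).trans (hM β ⟨le_rfl, hβ.le⟩)
  have hf : ContinuousOn (fun x => a - g x) (Icc β 1) := continuousOn_const.sub hg
  have hre : ∀ x ∈ Icc β 1, 0 < ((a : ℂ) - g x).re := fun x hx => by
    simp only [sub_re, ofReal_re]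
    linarith [re_le_norm (g x), hM x hx]
  have hbM : |b| ≤ M := abs_le_of_imSqrtIntegral_eq_zero hβ hf hre
    (fun x hx => by simpa using (abs_im_le_norm (g x)).trans (hM x hx)) hb
  have hR : ∀ x ∈ Icc β 1, ‖(a : ℂ) - g x + b * I - (√a : ℂ) ^ 2‖ ≤ 2 * M := by
    intro x hx
    calc ‖(a : ℂ) - g x + b * I - (√a : ℂ) ^ 2‖ = ‖b * I - g x‖ := by
          rw [← ofReal_pow, Real.sq_sqrt (by linarith)]
          ring_nf
      _ ≤ ‖(b : ℂ) * I‖ + ‖g x‖ := norm_sub_le _ _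
      _ = |b| + ‖g x‖ := by rw [norm_mul, norm_I, mul_one, norm_real, Real.norm_eq_abs]
      _ ≤ 2 * M := by linarith [hM x hx]
  have hest := abs_add_div_le_of_imSqrtIntegral_eq_zero hβ hf hre
    (Real.sqrt_pos.2 (by linarith)) hR hb
  have hint : (∫ x in β..1, (a - g x : ℂ)).im = -(∫ x in β..1, g x).im := by
    simp [integral_sub intervalIntegrable_const (hg.intervalIntegrable_of_Icc hβ.le)]
  rw [hint, Real.sq_sqrt (by linarith), neg_div, ← sub_eq_add_neg] at hest
  exact hest

theorem stmt9_general (V : ℂ → ℂ) (U : Set ℂ)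
    (hUV : ∀ x ∈ Set.Icc (-1:ℝ) 1, (x : ℂ) ∈ U)
    (hV : DifferentiableOn ℂ V U) (δ : ℝ) (β : ℝ) (hβ : β ∈ Set.Ioo (-1:ℝ) 1) :
    ∃ a₀ : ℝ, 0 < a₀ ∧ ∃ C : ℝ, 0 < C ∧
      ∀ a : ℝ, a₀ ≤ a →
        (∃! b : ℝ,
          (∫ x in β..(1:ℝ),
            ((a : ℂ) + (b : ℂ) * Complex.I - V (x : ℂ) - Complex.I * δ) ^ (1/2 : ℂ)).im
            = 0) ∧
        ∀ b : ℝ,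
          (∫ x in β..(1:ℝ),
            ((a : ℂ) + (b : ℂ) * Complex.I - V (x : ℂ) - Complex.I * δ) ^ (1/2 : ℂ)).im
            = 0 →
          |b - ((∫ x in β..(1:ℝ), V (x : ℂ)).im / (1 - β) + δ)| ≤ C / a := by
  obtain ⟨hβ₁, hβ⟩ := hβ
  have hVc : ContinuousOn (fun x : ℝ => V x) (Icc β 1) := hV.continuousOn.comp
    continuous_ofReal.continuousOn fun x hx => hUV x ⟨by linarith [hx.1], hx.2⟩
  obtain ⟨M, hM⟩ := isCompact_Icc.exists_bound_of_continuousOn hVc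
  have hM' : ∀ x ∈ Icc β 1, ‖V x‖ ≤ |M| + 1 := fun x hx => by
    linarith [hM x hx, le_abs_self M]
  refine ⟨|M| + 2, by positivity, (2 * (|M| + 1)) ^ 2, by positivity, fun a ha => ?_⟩
  have hre : ∀ x ∈ Icc β 1, 0 < ((a : ℂ) - V x).re := fun x hx => by
    simp only [sub_re, ofReal_re]
    linarith [re_le_norm (V x), hM' x hx]
  have hshift : ∀ b : ℝ,
      (∫ x in β..(1:ℝ), ((a : ℂ) + b * I - V x - I * δ) ^ (1/2 : ℂ)).im =
        imSqrtIntegral (fun x => a - V x) β (b - δ) := fun b => by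
    simp only [imSqrtIntegral]
    push_cast
    ring_nf
  simp only [hshift]
  obtain ⟨b₀, hb₀, huniq⟩ :=
    existsUnique_imSqrtIntegral_eq_zero (f := fun x => a - V x) hβ (continuousOn_const.sub hVc) hre
  refine ⟨⟨b₀ + δ, by simpa using hb₀, fun b hb => by linarith [huniq _ hb]⟩,
    fun b hb => ?_⟩
  have h := abs_sub_div_le_of_imSqrtIntegral_const_sub_eq_zero hβ hVc hM' (by linarith) hb
  rwa [sub_sub, add_comm δ] at h

/-- right case of Theorem `curveper`: for `a` large, the equation
`Im ∫_β^1 √((a+ib) − V(x) − iδ) dx = 0` has a unique real solution `b`, and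
`b = (Im ∫_β^1 V)/(1−β) + δ + O(1/a)`. -/
theorem stmt9 (V : ℂ → ℂ) (U : Set ℂ) (hU : IsOpen U)
    (hUV : ∀ x ∈ Set.Icc (-1:ℝ) 1, (x : ℂ) ∈ U)
    (hV : DifferentiableOn ℂ V U) (δ : ℝ) (β : ℝ) (hβ : β ∈ Set.Ioo (-1:ℝ) 1) :
    ∃ a₀ : ℝ, 0 < a₀ ∧ ∃ C : ℝ, 0 < C ∧
      ∀ a : ℝ, a₀ ≤ a →
        (∃! b : ℝ,
          (∫ x in β..(1:ℝ),
            ((a : ℂ) + (b : ℂ) * Complex.I - V (x : ℂ) - Complex.I * δ) ^ (1/2 : ℂ)).im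
            = 0) ∧
        ∀ b : ℝ,
          (∫ x in β..(1:ℝ),
            ((a : ℂ) + (b : ℂ) * Complex.I - V (x : ℂ) - Complex.I * δ) ^ (1/2 : ℂ)).im
            = 0 →
          |b - ((∫ x in β..(1:ℝ), V (x : ℂ)).im / (1 - β) + δ)| ≤ C / a :=
  stmt9_general V U hUV hV δ β hβ
end

section
/- Let β ∈ (−1,1) and δ ≥ 0. There exist a₀ > 0 and C > 0 such that for every real a ≥ a₀ there is a unique b ∈ ℝ with Im ∫_{−1}^{β} √((a + i·b) − i·x² + i·δ) dx = 0, and this unique b satisfies |b − ( (β² − β + 1)/3 − δ )| ≤ C/a, where √ denotes the principal branch of the complex square root. -/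
/-!
Put `y = Im √(a + ic)`. Since `Re √z ≥ 0`, squaring gives `y √(a + y²) = c/2`; the left-hand
side is strictly increasing in `y`, so `c ↦ y` is strictly increasing, and for `a > 0` the
relation yields `y = c/(2√a) + O(|c|³ a^{-5/2})`. Hence
`F(b) = Im ∫_{-1}^β √(a + ib − ix² + iδ) dx` is continuous and strictly increasing in `b`, and
`F(b) = (β + 1)(b − m)/(2√a) + O((β + 1) a^{-5/2})` for `|b − m| ≤ 1`, where
`m = (β² − β + 1)/3 − δ` is the mean of `x² − δ` over `[−1, β]`. So `F` changes sign on
`[m − a⁻², m + a⁻²]` and has exactly one zero, which lies there.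
-/

open Complex MeasureTheory

lemma strictMono_mul_sqrt_add_sq {a : ℝ} (ha : 0 ≤ a) :
    StrictMono fun y : ℝ => y * √(a + y ^ 2) := by
  intro y₁ y₂ h
  set x₁ := √(a + y₁ ^ 2)
  set x₂ := √(a + y₂ ^ 2)
  have h₁ : x₁ ^ 2 = a + y₁ ^ 2 := Real.sq_sqrt (by positivity)
  have h₂ : x₂ ^ 2 = a + y₂ ^ 2 := Real.sq_sqrt (by positivity)
  have hx : 0 < x₁ + x₂ := by
    rcases lt_or_ge 0 y₂ with hy | hy
    · have : 0 < x₂ := Real.sqrt_pos.2 (by positivity)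
      positivity
    · have : 0 < x₁ := Real.sqrt_pos.2 (by nlinarith)
      positivity
  have hid : (y₂ * x₂ - y₁ * x₁) * (x₁ + x₂) =
      (y₂ - y₁) * ((x₁ + x₂) ^ 2 + (y₁ + y₂) ^ 2) / 2 := by
    linear_combination ((y₁ + y₂) / 2) * h₂ - ((y₁ + y₂) / 2) * h₁
  have hpos : 0 < (y₂ * x₂ - y₁ * x₁) * (x₁ + x₂) := by
    rw [hid]
    have := sub_pos.2 h
    positivity
  show y₁ * x₁ < y₂ * x₂
  linarith [(pos_iff_pos_of_mul_pos hpos).2 hx]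

lemma im_mul_sqrt_re_sq_add_im_sq {w : ℂ} (hw : 0 ≤ w.re) :
    w.im * √((w ^ 2).re + w.im ^ 2) = (w ^ 2).im / 2 := by
  have hre : (w ^ 2).re + w.im ^ 2 = w.re ^ 2 := by simp [sq]
  rw [hre, Real.sqrt_sq hw]
  simp [sq]
  ring

noncomputable def sqrtIm (a c : ℝ) : ℝ := (((a : ℂ) + c * I) ^ (1 / 2 : ℂ)).im

lemma sqrtIm_mul_sqrt (a c : ℝ) : sqrtIm a c * √(a + sqrtIm a c ^ 2) = c / 2 := by
  have hre : 0 ≤ (((a : ℂ) + c * I) ^ (1 / 2 : ℂ)).re := by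
    rw [one_div, cpow_inv_two_re]
    exact Real.sqrt_nonneg _
  have hsq : (((a : ℂ) + c * I) ^ (1 / 2 : ℂ)) ^ 2 = a + c * I := by simp
  have := im_mul_sqrt_re_sq_add_im_sq hre
  rw [hsq] at this
  rw [sqrtIm]
  simpa using this

section sqrtIm

variable {a : ℝ}

lemma strictMono_sqrtIm (ha : 0 ≤ a) : StrictMono (sqrtIm a) := fun c₁ c₂ h => by
  rw [← (strictMono_mul_sqrt_add_sq ha).lt_iff_lt]
  simp only [sqrtIm_mul_sqrt]
  linarith

lemma continuous_cpow_one_half_add_mul_I (ha : 0 < a) :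
    Continuous fun c : ℝ => ((a : ℂ) + c * I) ^ (1 / 2 : ℂ) :=
  (by fun_prop : Continuous fun c : ℝ => (a : ℂ) + c * I).cpow
    continuous_const fun _ => mem_slitPlane_iff.2 (Or.inl (by simpa))

lemma continuous_sqrtIm (ha : 0 < a) : Continuous (sqrtIm a) :=
  continuous_im.comp (continuous_cpow_one_half_add_mul_I ha)

lemma abs_sqrtIm_sub_le (ha : 0 < a) (c : ℝ) :
    |sqrtIm a c - c / (2 * √a)| ≤ |c| ^ 3 / (16 * a ^ 2 * √a) := by
  set y := sqrtIm a c
  set s := √a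
  set x := √(a + y ^ 2)
  have hc : c = 2 * (y * x) := by linarith [sqrtIm_mul_sqrt a c]
  have hs : 0 < s := Real.sqrt_pos.2 ha
  have hs2 : s ^ 2 = a := Real.sq_sqrt ha.le
  have hx2 : x ^ 2 = a + y ^ 2 := Real.sq_sqrt (by positivity)
  have hsx : s ≤ x := Real.sqrt_le_sqrt (by nlinarith)
  have hy : |y| ≤ |c| / (2 * s) := by
    have : |c| = 2 * (|y| * x) := by
      rw [hc, abs_mul, abs_mul, abs_two, abs_of_nonneg (Real.sqrt_nonneg _)]
    rw [le_div_iff₀ (by positivity), this]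
    nlinarith [abs_nonneg y]
  have hxs : x - s ≤ y ^ 2 / (2 * s) := by
    rw [le_div_iff₀ (by positivity)]
    nlinarith
  have heq : y - c / (2 * s) = -(y * (x - s) / s) := by
    rw [hc]
    field_simp
    ring
  calc |y - c / (2 * s)| = |y| * (x - s) / s := by
        rw [heq, abs_neg, abs_div, abs_mul, abs_of_nonneg (sub_nonneg.2 hsx), abs_of_pos hs]
    _ ≤ |y| * (y ^ 2 / (2 * s)) / s := by gcongr
    _ = |y| ^ 3 / (2 * a) := by
        rw [← hs2, ← sq_abs]
        field_simp
    _ ≤ (|c| / (2 * s)) ^ 3 / (2 * a) := by gcongr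
    _ = |c| ^ 3 / (16 * a ^ 2 * s) := by
        rw [← hs2]
        field_simp
        ring

end sqrtIm
lemma StrictMono.existsUnique_eq_zero {f : ℝ → ℝ} (hf : StrictMono f) {m t : ℝ}
    (hfc : ContinuousOn f (Set.Icc (m - t) (m + t))) (hlo : f (m - t) ≤ 0) (hhi : 0 ≤ f (m + t)) :
    (∃! b, f b = 0) ∧ ∀ b, f b = 0 → |b - m| ≤ t := by
  have ht : m - t ≤ m + t := hf.le_iff_le.1 (hlo.trans hhi)
  obtain ⟨b₀, -, hb₀⟩ := intermediate_value_Icc ht hfc ⟨hlo, hhi⟩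
  refine ⟨⟨b₀, hb₀, fun b hb => hf.injective (hb.trans hb₀.symm)⟩, fun b hb => abs_le.2 ⟨?_, ?_⟩⟩
  · linarith [hf.le_iff_le.1 (hlo.trans hb.ge)]
  · linarith [hf.le_iff_le.1 (hb.le.trans hhi)]

lemma StrictMono.existsUnique_eq_zero_of_abs_sub_mul_le {f : ℝ → ℝ} (hf : StrictMono f)
    (hfc : Continuous f) {m k ε : ℝ} (hk : 0 < k) (hε : 0 ≤ ε)
    (happrox : ∀ b, |b - m| ≤ ε / k → |f b - k * (b - m)| ≤ ε) :
    (∃! b, f b = 0) ∧ ∀ b, f b = 0 → |b - m| ≤ ε / k := by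
  have ht : 0 ≤ ε / k := by positivity
  have hkt : k * (ε / k) = ε := mul_div_cancel₀ ε hk.ne'
  refine hf.existsUnique_eq_zero hfc.continuousOn ?_ ?_
  · have := happrox (m - ε / k) (by simp [abs_of_nonneg ht])
    rw [sub_sub_cancel_left, mul_neg, hkt, abs_le] at this
    linarith
  · have := happrox (m + ε / k) (by simp [abs_of_nonneg ht])
    rw [add_sub_cancel_left, hkt, abs_le] at this
    linarith

section Integral

variable {a u v : ℝ} {φ : ℝ → ℝ}

lemma strictMono_integral_sqrtIm_sub (ha : 0 < a) (hφ : Continuous φ) (huv : u < v) :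
    StrictMono fun b => ∫ x in u..v, sqrtIm a (b - φ x) := by
  intro b₁ b₂ hb
  have hint : ∀ b, IntervalIntegrable (fun x => sqrtIm a (b - φ x)) volume u v := fun b =>
    ((continuous_sqrtIm ha).comp (by fun_prop)).intervalIntegrable _ _
  have := intervalIntegral.intervalIntegral_pos_of_pos_on ((hint b₂).sub (hint b₁))
    (fun x _ => sub_pos.2 (strictMono_sqrtIm ha.le (by linarith))) huv
  rw [intervalIntegral.integral_sub (hint b₂) (hint b₁)] at this
  exact sub_pos.1 this

lemma continuous_integral_sqrtIm_sub (ha : 0 < a) (hφ : Continuous φ) :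
    Continuous fun b => ∫ x in u..v, sqrtIm a (b - φ x) :=
  intervalIntegral.continuous_parametric_intervalIntegral_of_continuous'
    (by have := continuous_sqrtIm ha; fun_prop) u v

lemma abs_integral_sqrtIm_sub_le (ha : 0 < a) (hφ : Continuous φ) {M : ℝ}
    (hM : ∀ x ∈ Set.uIcc u v, |φ x| ≤ M) :
    |(∫ x in u..v, sqrtIm a (φ x)) - (∫ x in u..v, φ x) / (2 * √a)| ≤
      M ^ 3 / (16 * a ^ 2 * √a) * |v - u| := by
  have hint : Continuous fun x => sqrtIm a (φ x) := (continuous_sqrtIm ha).comp hφ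
  rw [← intervalIntegral.integral_div, ← intervalIntegral.integral_sub
    (hint.intervalIntegrable u v) ((hφ.div_const _).intervalIntegrable u v), ← Real.norm_eq_abs]
  refine intervalIntegral.norm_integral_le_of_norm_le_const fun x hx => ?_
  rw [Real.norm_eq_abs]
  have hφx := hM x (Set.uIoc_subset_uIcc hx)
  refine (abs_sqrtIm_sub_le ha (φ x)).trans ?_
  gcongr

lemma im_intervalIntegral_cpow_one_half (ha : 0 < a) (hφ : Continuous φ) :
    (∫ x in u..v, ((a : ℂ) + φ x * I) ^ (1 / 2 : ℂ)).im = ∫ x in u..v, sqrtIm a (φ x) :=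
  (imCLM.intervalIntegral_comp_comm
    (((continuous_cpow_one_half_add_mul_I ha).comp hφ).intervalIntegrable u v)).symm

end Integral

lemma integral_sub_sq_sub (β b δ : ℝ) :
    ∫ x in (-1 : ℝ)..β, (b - (x ^ 2 - δ)) = (β + 1) * (b - ((β ^ 2 - β + 1) / 3 - δ)) := by
  have hsq : Continuous fun x : ℝ => x ^ 2 := continuous_pow 2
  have hφ : Continuous fun x : ℝ => x ^ 2 - δ := hsq.sub continuous_const
  rw [intervalIntegral.integral_sub intervalIntegrable_const (hφ.intervalIntegrable _ _),
    intervalIntegral.integral_sub (hsq.intervalIntegrable _ _) intervalIntegrable_const,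
    integral_pow]
  simp
  ring

lemma abs_sub_sq_sub_le {β b δ x : ℝ} (hβ : β ≤ 1) (hx : x ∈ Set.Icc (-1) β)
    (hb : |b - ((β ^ 2 - β + 1) / 3 - δ)| ≤ 1) : |b - (x ^ 2 - δ)| ≤ 2 := by
  obtain ⟨hx₁, hx₂⟩ := hx
  have hdev : |(β ^ 2 - β + 1) / 3 - x ^ 2| ≤ 1 :=
    abs_le.2 ⟨by nlinarith [sq_nonneg (β - 1 / 2)], by nlinarith [sq_nonneg x]⟩
  calc |b - (x ^ 2 - δ)| = |(b - ((β ^ 2 - β + 1) / 3 - δ)) + ((β ^ 2 - β + 1) / 3 - x ^ 2)| := by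
        ring_nf
    _ ≤ 2 := (abs_add_le _ _).trans (by linarith)

lemma abs_integral_sqrtIm_sub_sq_sub_le {a β b δ : ℝ} (ha : 0 < a) (hβ : β ∈ Set.Icc (-1) 1)
    (hb : |b - ((β ^ 2 - β + 1) / 3 - δ)| ≤ 1) :
    |(∫ x in (-1 : ℝ)..β, sqrtIm a (b - (x ^ 2 - δ))) -
        (β + 1) / (2 * √a) * (b - ((β ^ 2 - β + 1) / 3 - δ))| ≤ (β + 1) / (2 * a ^ 2 * √a) := by
  have := abs_integral_sqrtIm_sub_le (u := -1) (v := β) (M := 2)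
    (φ := fun x => b - (x ^ 2 - δ)) ha (by fun_prop) fun x hx =>
      abs_sub_sq_sub_le hβ.2 (Set.uIcc_of_le hβ.1 ▸ hx) hb
  rw [integral_sub_sq_sub, sub_neg_eq_add, abs_of_nonneg (a := β + 1) (by linarith [hβ.1])] at this
  convert this using 2
  · ring
  · field_simp
    ring

theorem stmt11_general (β : ℝ) (hβ : β ∈ Set.Ioo (-1:ℝ) 1) (δ : ℝ) :
    ∃ a₀ : ℝ, 0 < a₀ ∧ ∃ C : ℝ, 0 < C ∧
      ∀ a : ℝ, a₀ ≤ a →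
        (∃! b : ℝ,
          (∫ x in (-1:ℝ)..β,
            ((a : ℂ) + (b : ℂ) * Complex.I - Complex.I * (x : ℂ) ^ 2
              + Complex.I * δ) ^ (1/2 : ℂ)).im = 0) ∧
        ∀ b : ℝ,
          (∫ x in (-1:ℝ)..β,
            ((a : ℂ) + (b : ℂ) * Complex.I - Complex.I * (x : ℂ) ^ 2
              + Complex.I * δ) ^ (1/2 : ℂ)).im = 0 →
          |b - ((β ^ 2 - β + 1) / 3 - δ)| ≤ C / a := by
  obtain ⟨hβ₁, hβ₂⟩ := hβ
  refine ⟨1, one_pos, 1, one_pos, fun a ha => ?_⟩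
  have ha₀ : 0 < a := one_pos.trans_le ha
  have hL : 0 < β + 1 := by linarith
  have hφ : Continuous fun x : ℝ => x ^ 2 - δ := by fun_prop
  have hF : ∀ b : ℝ, (∫ x in (-1:ℝ)..β, ((a : ℂ) + (b : ℂ) * Complex.I
      - Complex.I * (x : ℂ) ^ 2 + Complex.I * δ) ^ (1/2 : ℂ)).im =
      ∫ x in (-1:ℝ)..β, sqrtIm a (b - (x ^ 2 - δ)) := fun b => by
    rw [← im_intervalIntegral_cpow_one_half ha₀ (by fun_prop)]
    congr 3 with x
    congr 1
    push_cast
    ring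
  have hεk : (β + 1) / (2 * a ^ 2 * √a) / ((β + 1) / (2 * √a)) = 1 / a ^ 2 := by
    field_simp
  obtain ⟨hex, hnear⟩ := (strictMono_integral_sqrtIm_sub (u := -1) (v := β) ha₀ hφ (by linarith)
    ).existsUnique_eq_zero_of_abs_sub_mul_le (m := (β ^ 2 - β + 1) / 3 - δ)
    (ε := (β + 1) / (2 * a ^ 2 * √a)) (continuous_integral_sqrtIm_sub ha₀ hφ)
    (by positivity : 0 < (β + 1) / (2 * √a)) (by positivity) fun b hb =>
      abs_integral_sqrtIm_sub_sq_sub_le ha₀ ⟨hβ₁.le, hβ₂.le⟩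
        (hb.trans (by rw [hεk, div_le_one (by positivity)]; nlinarith))
  simp only [hF]
  refine ⟨hex, fun b hb => (hnear b hb).trans ?_⟩
  rw [hεk]
  exact one_div_le_one_div_of_le ha₀ (by nlinarith)

/-- Theorem `infiniper`(2): for `a` large,
`Im ∫_{-1}^β √((a+ib) − ix² + iδ) dx = 0` has a unique real solution `b`, with
`|b − ((β²−β+1)/3 − δ)| ≤ C/a`: the curve `Γ_{-1,β}` is asymptotic to
`ℝ + i(β²−β+1)/3 − iδ`. -/
theorem stmt11 (β : ℝ) (hβ : β ∈ Set.Ioo (-1:ℝ) 1) (δ : ℝ) (hδ : 0 ≤ δ) :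
    ∃ a₀ : ℝ, 0 < a₀ ∧ ∃ C : ℝ, 0 < C ∧
      ∀ a : ℝ, a₀ ≤ a →
        (∃! b : ℝ,
          (∫ x in (-1:ℝ)..β,
            ((a : ℂ) + (b : ℂ) * Complex.I - Complex.I * (x : ℂ) ^ 2
              + Complex.I * δ) ^ (1/2 : ℂ)).im = 0) ∧
        ∀ b : ℝ,
          (∫ x in (-1:ℝ)..β,
            ((a : ℂ) + (b : ℂ) * Complex.I - Complex.I * (x : ℂ) ^ 2
              + Complex.I * δ) ^ (1/2 : ℂ)).im = 0 →
          |b - ((β ^ 2 - β + 1) / 3 - δ)| ≤ C / a :=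
  stmt11_general β hβ δ
end
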